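/- arXiv:1608.01578 — 3 statements merged into one kernel-verified Lean document; each statement's English description precedes it below -/
import Mathlib

section
/- The left semi-tensor product is associative: for any real matrices A, B, C of arbitrary (finite) sizes, (A⋉B)⋉C = A⋉(B⋉C). -/
/-!
Both bracketings are products `(A ⊗ I_a)(B ⊗ I_b)(C ⊗ I_c)` of three padded factors. Padding a
semi-tensor product once more can be pushed inside it, because `(X Y) ⊗ I_d = (X ⊗ I_d)(Y ⊗ I_d)`
and `(X ⊗ I_a) ⊗ I_d = X ⊗ I_{ad}`. The two triples of padding sizes agree: since `n a = p b` and
`q b = r c`, the middle size `b` determines the other two, and in either bracketing `p q b` equals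
`lcm (n q) (lcm (p q) (p r))`.
-/

def kron {m n p q : ℕ} (A : Matrix (Fin m) (Fin n) ℝ) (B : Matrix (Fin p) (Fin q) ℝ) :
    Matrix (Fin (m * p)) (Fin (n * q)) ℝ :=
  Matrix.reindex finProdFinEquiv finProdFinEquiv (Matrix.kroneckerMap (· * ·) A B)

def castM {m n m' n' : ℕ} (hm : m = m') (hn : n = n') (A : Matrix (Fin m) (Fin n) ℝ) :
    Matrix (Fin m') (Fin n') ℝ :=
  Matrix.reindex (finCongr hm) (finCongr hn) A

/-- The left semi-tensor product `A ⋉ B := (A ⊗ I_{t/n})(B ⊗ I_{t/p})`, `t = lcm n p`. -/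
def stp {m n p q : ℕ} (A : Matrix (Fin m) (Fin n) ℝ) (B : Matrix (Fin p) (Fin q) ℝ) :
    Matrix (Fin (m * (Nat.lcm n p / n))) (Fin (q * (Nat.lcm n p / p))) ℝ :=
  castM rfl (Nat.mul_div_cancel' (Nat.dvd_lcm_left n p))
      (kron A (1 : Matrix (Fin (Nat.lcm n p / n)) (Fin (Nat.lcm n p / n)) ℝ)) *
    castM (Nat.mul_div_cancel' (Nat.dvd_lcm_right n p)) rfl
      (kron B (1 : Matrix (Fin (Nat.lcm n p / p)) (Fin (Nat.lcm n p / p)) ℝ))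

lemma castM_heq {m n m' n' : ℕ} (hm : m = m') (hn : n = n') (A : Matrix (Fin m) (Fin n) ℝ) :
    HEq (castM hm hn A) A := by
  subst hm hn
  rfl

lemma finProdFinEquiv_assoc {m p r : ℕ} (a : Fin m) (b : Fin p) (c : Fin r) :
    Fin.cast (mul_assoc m p r) (finProdFinEquiv (finProdFinEquiv (a, b), c)) =
      finProdFinEquiv (a, finProdFinEquiv (b, c)) := by
  ext
  simp only [Fin.val_cast, finProdFinEquiv_apply_val]
  ring

lemma kron_assoc {m n p q r s : ℕ} (A : Matrix (Fin m) (Fin n) ℝ) (B : Matrix (Fin p) (Fin q) ℝ)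
    (C : Matrix (Fin r) (Fin s) ℝ) :
    castM (mul_assoc m p r) (mul_assoc n q s) (kron (kron A B) C) = kron A (kron B C) := by
  ext i j
  obtain ⟨i, rfl⟩ := (finCongr (mul_assoc m p r)).surjective i
  obtain ⟨j, rfl⟩ := (finCongr (mul_assoc n q s)).surjective j
  simp only [castM, Matrix.reindex_apply, Matrix.submatrix_apply, Equiv.symm_apply_apply]
  obtain ⟨⟨ab, c⟩, rfl⟩ := finProdFinEquiv.surjective i
  obtain ⟨⟨a, b⟩, rfl⟩ := finProdFinEquiv.surjective ab
  obtain ⟨⟨de, f⟩, rfl⟩ := finProdFinEquiv.surjective j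
  obtain ⟨⟨d, e⟩, rfl⟩ := finProdFinEquiv.surjective de
  simp [kron, finProdFinEquiv_assoc, mul_assoc]

lemma heq_mul_of_heq {m n k m' n' k' : ℕ} (hm : m = m') (hn : n = n') (hk : k = k')
    {A : Matrix (Fin m) (Fin n) ℝ} {A' : Matrix (Fin m') (Fin n') ℝ}
    {B : Matrix (Fin n) (Fin k) ℝ} {B' : Matrix (Fin n') (Fin k') ℝ}
    (hA : HEq A A') (hB : HEq B B') : HEq (A * B) (A' * B') := by
  subst hm hn hk
  rw [eq_of_heq hA, eq_of_heq hB]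

lemma kron_mul {m n k p q r : ℕ} (A : Matrix (Fin m) (Fin n) ℝ) (B : Matrix (Fin n) (Fin k) ℝ)
    (C : Matrix (Fin p) (Fin q) ℝ) (D : Matrix (Fin q) (Fin r) ℝ) :
    kron (A * B) (C * D) = kron A C * kron B D := by
  simp only [kron, Matrix.mul_kronecker_mul, Matrix.reindex_apply, Matrix.submatrix_mul_equiv]

lemma kron_mul_one {m n k d : ℕ} (A : Matrix (Fin m) (Fin n) ℝ) (B : Matrix (Fin n) (Fin k) ℝ) :
    kron (A * B) (1 : Matrix (Fin d) (Fin d) ℝ) =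
      kron A (1 : Matrix (Fin d) (Fin d) ℝ) * kron B (1 : Matrix (Fin d) (Fin d) ℝ) := by
  rw [← kron_mul, Matrix.mul_one]

lemma kron_one_one (a b : ℕ) :
    kron (1 : Matrix (Fin a) (Fin a) ℝ) (1 : Matrix (Fin b) (Fin b) ℝ) = 1 := by
  simp [kron]

lemma kron_castM_kron_one_heq {m n m' n' a d : ℕ} (hm : m * a = m') (hn : n * a = n')
    (A : Matrix (Fin m) (Fin n) ℝ) :
    HEq (kron (castM hm hn (kron A (1 : Matrix (Fin a) (Fin a) ℝ))) (1 : Matrix (Fin d) (Fin d) ℝ))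
      (kron A (1 : Matrix (Fin (a * d)) (Fin (a * d)) ℝ)) := by
  subst hm hn
  rw [← kron_one_one, ← kron_assoc]
  exact (castM_heq _ _ _).symm

section PaddedMul

variable {m n p q r s : ℕ} (A : Matrix (Fin m) (Fin n) ℝ) (B : Matrix (Fin p) (Fin q) ℝ)
  (C : Matrix (Fin r) (Fin s) ℝ)

/-- The semi-tensor product computed through an arbitrary common multiple `k = n a = p b` of `n`
and `p` instead of `lcm n p`. -/
def paddedMul {a b k : ℕ} (ha : n * a = k) (hb : p * b = k) :
    Matrix (Fin (m * a)) (Fin (q * b)) ℝ :=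
  castM rfl ha (kron A (1 : Matrix (Fin a) (Fin a) ℝ)) *
    castM hb rfl (kron B (1 : Matrix (Fin b) (Fin b) ℝ))

lemma stp_eq_paddedMul :
    stp A B = paddedMul A B (Nat.mul_div_cancel' (Nat.dvd_lcm_left n p))
      (Nat.mul_div_cancel' (Nat.dvd_lcm_right n p)) :=
  rfl

def paddedMul₃ {a b c k l : ℕ} (ha : n * a = k) (hb : p * b = k) (hb' : q * b = l)
    (hc : r * c = l) : Matrix (Fin (m * a)) (Fin (s * c)) ℝ :=
  castM rfl ha (kron A (1 : Matrix (Fin a) (Fin a) ℝ)) *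
    castM hb hb' (kron B (1 : Matrix (Fin b) (Fin b) ℝ)) *
    castM hc rfl (kron C (1 : Matrix (Fin c) (Fin c) ℝ))

lemma kron_paddedMul_one_heq {a b k : ℕ} (ha : n * a = k) (hb : p * b = k) (d : ℕ) :
    HEq (kron (paddedMul A B ha hb) (1 : Matrix (Fin d) (Fin d) ℝ))
      (paddedMul A B (a := a * d) (b := b * d) (k := k * d) (by rw [← ha, mul_assoc])
        (by rw [← hb, mul_assoc])) := by
  rw [paddedMul, kron_mul_one]
  exact heq_mul_of_heq (mul_assoc _ _ _) rfl (mul_assoc _ _ _)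
    ((kron_castM_kron_one_heq _ _ A).trans (castM_heq _ _ _).symm)
    ((kron_castM_kron_one_heq _ _ B).trans (castM_heq _ _ _).symm)

lemma paddedMul_paddedMul_heq_left {a b k u v l : ℕ} (ha : n * a = k) (hb : p * b = k)
    (hu : q * b * u = l) (hv : r * v = l) :
    HEq (paddedMul (paddedMul A B ha hb) C hu hv)
      (paddedMul₃ A B C (a := a * u) (b := b * u) (k := k * u) (by rw [← ha, mul_assoc])
        (by rw [← hb, mul_assoc]) (by rw [← hu, mul_assoc]) hv) :=
  heq_mul_of_heq (mul_assoc m a u) rfl rfl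
    ((castM_heq _ _ _).trans <| (kron_paddedMul_one_heq A B ha hb u).trans <|
      heq_mul_of_heq rfl rfl (by rw [← hu, mul_assoc]) HEq.rfl
        ((castM_heq _ _ _).trans (castM_heq _ _ _).symm))
    HEq.rfl

lemma paddedMul_paddedMul_heq_right {b c l w x k : ℕ} (hb : q * b = l) (hc : r * c = l)
    (hw : n * w = k) (hx : p * b * x = k) :
    HEq (paddedMul A (paddedMul B C hb hc) hw hx)
      (paddedMul₃ A B C (b := b * x) (c := c * x) (l := l * x) hw (by rw [← hx, mul_assoc])
        (by rw [← hb, mul_assoc]) (by rw [← hc, mul_assoc])) := by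
  rw [paddedMul₃, Matrix.mul_assoc]
  exact heq_mul_of_heq rfl rfl (mul_assoc s c x) HEq.rfl
    ((castM_heq _ _ _).trans <| (kron_paddedMul_one_heq B C hb hc x).trans <|
      heq_mul_of_heq (by rw [← hx, mul_assoc]) rfl rfl
        ((castM_heq _ _ _).trans (castM_heq _ _ _).symm) HEq.rfl)

lemma paddedMul₃_heq_of_eq (hn : 0 < n) (hr : 0 < r) {a b c k l a' b' c' k' l' : ℕ}
    (ha : n * a = k) (hb : p * b = k) (hb' : q * b = l) (hc : r * c = l)
    (ha₂ : n * a' = k') (hb₂ : p * b' = k') (hb₂' : q * b' = l') (hc₂ : r * c' = l')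
    (h : b = b') :
    HEq (paddedMul₃ A B C ha hb hb' hc) (paddedMul₃ A B C ha₂ hb₂ hb₂' hc₂) := by
  subst h hb hb' hb₂ hb₂'
  obtain rfl : a = a' := Nat.eq_of_mul_eq_mul_left hn (ha.trans ha₂.symm)
  obtain rfl : c = c' := Nat.eq_of_mul_eq_mul_left hr (hc.trans hc₂.symm)
  rfl

end PaddedMul

lemma mul_lcm_padding_eq {n p q r b u b' x : ℕ} (hp : 0 < p) (hq : 0 < q)
    (hb : p * b = Nat.lcm n p) (hu : q * b * u = Nat.lcm (q * b) r)
    (hb' : q * b' = Nat.lcm q r) (hx : p * b' * x = Nat.lcm n (p * b')) : b * u = b' * x := by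
  apply Nat.eq_of_mul_eq_mul_left (Nat.mul_pos hp hq)
  calc p * q * (b * u) = p * (q * b * u) := by ring
    _ = Nat.lcm (q * Nat.lcm n p) (p * r) := by
      rw [hu, ← Nat.lcm_mul_left, ← hb, mul_left_comm]
    _ = Nat.lcm (q * n) (Nat.lcm (p * q) (p * r)) := by
      rw [← Nat.lcm_mul_left, Nat.lcm_assoc, mul_comm q p]
    _ = q * Nat.lcm n (p * b') := by
      rw [← Nat.lcm_mul_left, mul_left_comm, hb', Nat.lcm_mul_left p]
    _ = p * q * (b' * x) := by rw [← hx]; ring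

theorem stp_assoc_general (m n p q r s : ℕ) (hn : 0 < n) (hp : 0 < p)
    (hq : 0 < q) (hr : 0 < r)
    (A : Matrix (Fin m) (Fin n) ℝ) (B : Matrix (Fin p) (Fin q) ℝ)
    (C : Matrix (Fin r) (Fin s) ℝ) :
    HEq (stp (stp A B) C) (stp A (stp B C)) := by
  simp only [stp_eq_paddedMul]
  refine (paddedMul_paddedMul_heq_left A B C _ _ _ _).trans
    (HEq.trans ?_ (paddedMul_paddedMul_heq_right A B C _ _ _ _).symm)
  exact paddedMul₃_heq_of_eq A B C hn hr _ _ _ _ _ _ _ _ <|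
    mul_lcm_padding_eq hp hq (Nat.mul_div_cancel' (Nat.dvd_lcm_right n p))
      (Nat.mul_div_cancel' (Nat.dvd_lcm_left _ r)) (Nat.mul_div_cancel' (Nat.dvd_lcm_left q r))
      (Nat.mul_div_cancel' (Nat.dvd_lcm_right n _))

/-- the left semi-tensor product is associative:
`(A ⋉ B) ⋉ C = A ⋉ (B ⋉ C)` (up to the canonical identification of index types). -/
theorem stp_assoc (m n p q r s : ℕ) (hm : 0 < m) (hn : 0 < n) (hp : 0 < p)
    (hq : 0 < q) (hr : 0 < r) (hs : 0 < s)
    (A : Matrix (Fin m) (Fin n) ℝ) (B : Matrix (Fin p) (Fin q) ℝ)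
    (C : Matrix (Fin r) (Fin s) ℝ) :
    HEq (stp (stp A B) C) (stp A (stp B C)) :=
  stp_assoc_general m n p q r s hn hp hq hr A B C
end

section
/- Left identity equivalence is a congruence with respect to the left semi-tensor product: if A₀ is m×n, B₀ is p×q, and s₁, s₂, t₁, t₂ are positive integers, then (A₀⊗I_{s₁})⋉(B₀⊗I_{t₁}) ∼ (A₀⊗I_{s₂})⋉(B₀⊗I_{t₂}). -/
/-- The collection of all finite-dimensional real matrices. -/
def MatR := Σ m n : ℕ, Matrix (Fin m) (Fin n) ℝ

/-- `A ⊗ I_s` as an element of `MatR`. -/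
def padK (A : MatR) (s : ℕ) : MatR :=
  ⟨A.1 * s, A.2.1 * s, kron A.2.2 (1 : Matrix (Fin s) (Fin s) ℝ)⟩

/-- Left identity equivalence: `A ∼ B` iff `A ⊗ I_s = B ⊗ I_t` for some positive `s, t`. -/
def lie (A B : MatR) : Prop :=
  ∃ s t : ℕ, 0 < s ∧ 0 < t ∧ HEq (padK A s).2.2 (padK B t).2.2

/-- A matrix, viewed as a function `ℕ → ℕ → ℝ` vanishing outside its index range. -/
def toFun (A : MatR) : ℕ → ℕ → ℝ := fun i j =>
  if hi : i < A.1 then if hj : j < A.2.1 then A.2.2 ⟨i, hi⟩ ⟨j, hj⟩ else 0 else 0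

/-- The left semi-tensor addition `A ⊞ B := (A ⊗ I_{t/m}) + (B ⊗ I_{t/p})`, where `m, p`
are the row numbers of `A, B` and `t = lcm m p`.  (For matrices with equal row/column
ratio this agrees with the usual definition.) -/
def staM (A B : MatR) : MatR :=
  ⟨Nat.lcm A.1 B.1, A.2.1 * (Nat.lcm A.1 B.1 / A.1),
    Matrix.of fun i j =>
      toFun (padK A (Nat.lcm A.1 B.1 / A.1)) i.1 j.1 +
        toFun (padK B (Nat.lcm A.1 B.1 / B.1)) i.1 j.1⟩

/-- Entrywise scalar multiple. -/
def smulM (c : ℝ) (A : MatR) : MatR := ⟨A.1, A.2.1, c • A.2.2⟩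

/-- The left semi-tensor product `A ⋉ B := (A ⊗ I_{T/n})(B ⊗ I_{T/p})`, `T = lcm n p`
with `n` the column number of `A` and `p` the row number of `B`. -/
def stpM (A B : MatR) : MatR :=
  ⟨A.1 * (Nat.lcm A.2.1 B.1 / A.2.1), B.2.1 * (Nat.lcm A.2.1 B.1 / B.1),
    Matrix.of fun i j =>
      ∑ k ∈ Finset.range (Nat.lcm A.2.1 B.1),
        toFun (padK A (Nat.lcm A.2.1 B.1 / A.2.1)) i.1 k *
          toFun (padK B (Nat.lcm A.2.1 B.1 / B.1)) k j.1⟩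

/-- A matrix is reducible if it is of the form `B ⊗ I_s` with `s ≥ 2`. -/
def reducibleM (A : MatR) : Prop := ∃ (B : MatR) (s : ℕ), 2 ≤ s ∧ A = padK B s

lemma toFun_padK (X : MatR) {w : ℕ} (hw : 0 < w) (i j : ℕ) :
    toFun (padK X w) i j
      = toFun X (i / w) (j / w) * (if i % w = j % w then 1 else 0) := by
  unfold toFun padK kron
  by_cases hi : i < X.1 * w
  · have hi' : i / w < X.1 := Nat.div_lt_of_lt_mul (by rwa [Nat.mul_comm])
    by_cases hj : j < X.2.1 * w
    · have hj' : j / w < X.2.1 := Nat.div_lt_of_lt_mul (by rwa [Nat.mul_comm])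
      rw [dif_pos hi, dif_pos hj, dif_pos hi', dif_pos hj']
      simp [Matrix.reindex_apply, Matrix.submatrix_apply, finProdFinEquiv,
        Fin.divNat, Fin.modNat, Matrix.one_apply, Fin.ext_iff]
    · have hj' : ¬ j / w < X.2.1 := by rw [Nat.div_lt_iff_lt_mul hw]; exact hj
      rw [dif_pos hi, dif_neg hj, dif_pos hi', dif_neg hj', zero_mul]
  · have hi' : ¬ i / w < X.1 := by rw [Nat.div_lt_iff_lt_mul hw]; exact hi
    rw [dif_neg hi, dif_neg hi', zero_mul]
lemma mod_decomp {a b : ℕ} (x : ℕ) : x % (b * a) = b * ((x / b) % a) + x % b := by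
  have e1 : b * (x / b) + x % b = x := Nat.div_add_mod x b
  have e2 : a * (x / b / a) + (x / b) % a = x / b := Nat.div_add_mod (x / b) a
  have e3 : b * a * (x / (b * a)) + x % (b * a) = x := Nat.div_add_mod x (b * a)
  have e4 : x / b / a = x / (b * a) := Nat.div_div_eq_div_mul x b a
  rw [e4] at e2
  have e2' : b * (a * (x / (b * a)) + (x / b) % a) = b * (x / b) := by rw [e2]
  have e5 : b * a * (x / (b * a)) + (b * ((x / b) % a) + x % b) = x := by
    calc b * a * (x / (b * a)) + (b * ((x / b) % a) + x % b)
        = b * (a * (x / (b * a)) + (x / b) % a) + x % b := by ring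
      _ = b * (x / b) + x % b := by rw [e2']
      _ = x := e1
  omega
lemma mod_mul_iff {a b : ℕ} (hb : 0 < b) (i j : ℕ) :
    i % (b * a) = j % (b * a) ↔ (i / b) % a = (j / b) % a ∧ i % b = j % b := by
  rw [mod_decomp i, mod_decomp j]
  constructor
  · intro h
    have hi : i % b < b := Nat.mod_lt _ hb
    have hj : j % b < b := Nat.mod_lt _ hb
    have h1 : i % b = j % b := by
      have := congrArg (· % b) h
      simpa [Nat.mul_add_mod, Nat.mod_eq_of_lt hi, Nat.mod_eq_of_lt hj] using this
    refine ⟨?_, h1⟩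
    rw [h1] at h
    exact Nat.eq_of_mul_eq_mul_left hb (by omega)
  · rintro ⟨h1, h2⟩
    rw [h1, h2]
lemma toFun_padK_padK (X : MatR) {a b : ℕ} (ha : 0 < a) (hb : 0 < b) (i j : ℕ) :
    toFun (padK (padK X a) b) i j = toFun (padK X (a * b)) i j := by
  rw [toFun_padK _ hb, toFun_padK X ha, toFun_padK X (Nat.mul_pos ha hb)]
  have hdiv : ∀ x : ℕ, x / b / a = x / (a * b) := by
    intro x; rw [Nat.div_div_eq_div_mul, Nat.mul_comm]
  rw [hdiv i, hdiv j]
  have hmod := mod_mul_iff (a := a) hb i j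
  rw [Nat.mul_comm b a] at hmod
  by_cases h : i % (a * b) = j % (a * b)
  · rw [if_pos h, if_pos (hmod.mp h).1, if_pos (hmod.mp h).2, mul_one, mul_one]
  · rw [if_neg h]
    by_cases h1 : (i / b) % a = (j / b) % a
    · have h2 : ¬ i % b = j % b := fun h2 => h (hmod.mpr ⟨h1, h2⟩)
      rw [if_neg h2]; ring
    · rw [if_neg h1]; ring
lemma sum_range_mul (F : ℕ → ℝ) (T : ℕ) {w : ℕ} (hw : 0 < w) :
    ∑ k ∈ Finset.range (T * w), F k
      = ∑ a ∈ Finset.range T, ∑ b ∈ Finset.range w, F (w * a + b) := by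
  rw [← Finset.sum_product']
  apply Finset.sum_nbij' (i := fun k => (k / w, k % w)) (j := fun p => w * p.1 + p.2)
  · intro k hk
    simp only [Finset.mem_range] at hk
    simp only [Finset.mem_product, Finset.mem_range]
    exact ⟨Nat.div_lt_of_lt_mul (by rwa [Nat.mul_comm] at hk), Nat.mod_lt _ hw⟩
  · intro p hp
    simp only [Finset.mem_product, Finset.mem_range] at hp
    simp only [Finset.mem_range]
    calc w * p.1 + p.2 < w * p.1 + w := by omega
      _ = w * (p.1 + 1) := by ring
      _ ≤ w * T := Nat.mul_le_mul_left w hp.1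
      _ = T * w := Nat.mul_comm w T
  · intro k _; exact Nat.div_add_mod k w
  · intro p hp
    simp only [Finset.mem_product, Finset.mem_range] at hp
    have h1 : (w * p.1 + p.2) / w = p.1 := by
      rw [Nat.mul_add_div hw, Nat.div_eq_of_lt hp.2, Nat.add_zero]
    have h2 : (w * p.1 + p.2) % w = p.2 := by
      rw [Nat.mul_add_mod, Nat.mod_eq_of_lt hp.2]
    rw [h1, h2]
  · intro k _; exact congrArg F (Nat.div_add_mod k w).symm
def Phi (A₀ B₀ : MatR) (T : ℕ) : ℕ → ℕ → ℝ := fun i j =>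
  ∑ k ∈ Finset.range T,
    toFun (padK A₀ (T / A₀.2.1)) i k * toFun (padK B₀ (T / B₀.1)) k j
lemma Phi_scale (A₀ B₀ : MatR) {T w : ℕ} (hT : 0 < T) (hw : 0 < w)
    (hn : A₀.2.1 ∣ T) (hp : B₀.1 ∣ T) (hn0 : 0 < A₀.2.1) (hp0 : 0 < B₀.1) (i j : ℕ) :
    Phi A₀ B₀ (T * w) i j
      = Phi A₀ B₀ T (i / w) (j / w) * (if i % w = j % w then 1 else 0) := by
  have hu : 0 < T / A₀.2.1 := Nat.div_pos (Nat.le_of_dvd hT hn) hn0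
  have hv : 0 < T / B₀.1 := Nat.div_pos (Nat.le_of_dvd hT hp) hp0
  have hnw : T * w / A₀.2.1 = T / A₀.2.1 * w := by
    rw [Nat.mul_comm T w, Nat.mul_div_assoc w hn, Nat.mul_comm]
  have hpw : T * w / B₀.1 = T / B₀.1 * w := by
    rw [Nat.mul_comm T w, Nat.mul_div_assoc w hp, Nat.mul_comm]
  unfold Phi
  rw [hnw, hpw, sum_range_mul _ T hw]
  rw [Finset.sum_mul]
  apply Finset.sum_congr rfl
  intro a ha
  simp only [Finset.mem_range] at ha
  have key : ∀ b ∈ Finset.range w,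
      toFun (padK A₀ (T / A₀.2.1 * w)) i (w * a + b) *
        toFun (padK B₀ (T / B₀.1 * w)) (w * a + b) j
      = (if b = i % w then
          toFun (padK A₀ (T / A₀.2.1)) (i / w) a *
            toFun (padK B₀ (T / B₀.1)) a (j / w) *
            (if i % w = j % w then 1 else 0) else 0) := by
    intro b hb
    simp only [Finset.mem_range] at hb
    rw [← toFun_padK_padK A₀ hu hw, ← toFun_padK_padK B₀ hv hw,
      toFun_padK _ hw, toFun_padK _ hw]
    have h1 : (w * a + b) / w = a := by
      rw [Nat.mul_add_div hw, Nat.div_eq_of_lt hb, Nat.add_zero]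
    have h2 : (w * a + b) % w = b := by
      rw [Nat.mul_add_mod, Nat.mod_eq_of_lt hb]
    rw [h1, h2]
    by_cases hbi : b = i % w
    · subst hbi
      by_cases hij : i % w = j % w <;> simp [hij] <;> ring
    · rw [if_neg hbi, if_neg (fun h => hbi h.symm)]; ring
  rw [Finset.sum_congr rfl key, Finset.sum_ite_eq' (Finset.range w) (i % w)]
  rw [if_pos (Finset.mem_range.mpr (Nat.mod_lt _ hw))]
lemma toFun_stpM (A B : MatR) (i j : ℕ) :
    toFun (stpM A B) i j =
      ∑ k ∈ Finset.range (Nat.lcm A.2.1 B.1),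
        toFun (padK A (Nat.lcm A.2.1 B.1 / A.2.1)) i k *
          toFun (padK B (Nat.lcm A.2.1 B.1 / B.1)) k j := by
  by_cases hi : i < (stpM A B).1
  · by_cases hj : j < (stpM A B).2.1
    · rw [toFun, dif_pos hi, dif_pos hj]; rfl
    · rw [toFun, dif_pos hi, dif_neg hj]
      symm; apply Finset.sum_eq_zero; intro k _
      have : toFun (padK B (Nat.lcm A.2.1 B.1 / B.1)) k j = 0 := by
        rw [toFun]
        split
        · exact dif_neg hj
        · rfl
      rw [this, mul_zero]
  · rw [toFun, dif_neg hi]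
    symm; apply Finset.sum_eq_zero; intro k _
    have : toFun (padK A (Nat.lcm A.2.1 B.1 / A.2.1)) i k = 0 := dif_neg hi
    rw [this, zero_mul]
lemma toFun_stpM_padK (A₀ B₀ : MatR) (hn0 : 0 < A₀.2.1) (hp0 : 0 < B₀.1)
    {s t : ℕ} (hs : 0 < s) (ht : 0 < t) (i j : ℕ) :
    toFun (stpM (padK A₀ s) (padK B₀ t)) i j
      = Phi A₀ B₀ (Nat.lcm (A₀.2.1 * s) (B₀.1 * t)) i j := by
  set T := Nat.lcm (A₀.2.1 * s) (B₀.1 * t) with hT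
  have hT0 : 0 < T := Nat.lcm_pos (Nat.mul_pos hn0 hs) (Nat.mul_pos hp0 ht)
  have hns : A₀.2.1 * s ∣ T := Nat.dvd_lcm_left _ _
  have hpt : B₀.1 * t ∣ T := Nat.dvd_lcm_right _ _
  have hsdvd : s ∣ T / A₀.2.1 := (Nat.dvd_div_iff_mul_dvd (dvd_trans ⟨s, rfl⟩ hns)).mpr hns
  have htdvd : t ∣ T / B₀.1 := (Nat.dvd_div_iff_mul_dvd (dvd_trans ⟨t, rfl⟩ hpt)).mpr hpt
  have hu : T / (A₀.2.1 * s) = T / A₀.2.1 / s := (Nat.div_div_eq_div_mul _ _ _).symm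
  have hv : T / (B₀.1 * t) = T / B₀.1 / t := (Nat.div_div_eq_div_mul _ _ _).symm
  have hu0 : 0 < T / A₀.2.1 / s := by
    rw [← hu]; exact Nat.div_pos (Nat.le_of_dvd hT0 hns) (Nat.mul_pos hn0 hs)
  have hv0 : 0 < T / B₀.1 / t := by
    rw [← hv]; exact Nat.div_pos (Nat.le_of_dvd hT0 hpt) (Nat.mul_pos hp0 ht)
  have hAeq : s * (T / A₀.2.1 / s) = T / A₀.2.1 := Nat.mul_div_cancel' hsdvd
  have hBeq : t * (T / B₀.1 / t) = T / B₀.1 := Nat.mul_div_cancel' htdvd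
  rw [toFun_stpM]
  have hcolA : (padK A₀ s).2.1 = A₀.2.1 * s := rfl
  have hrowB : (padK B₀ t).1 = B₀.1 * t := rfl
  rw [hcolA, hrowB, ← hT]
  unfold Phi
  apply Finset.sum_congr rfl
  intro k _
  rw [hu, hv, toFun_padK_padK A₀ hs hu0, toFun_padK_padK B₀ ht hv0, hAeq, hBeq]
lemma heq_of_toFun (X Y : MatR) (h1 : X.1 = Y.1) (h2 : X.2.1 = Y.2.1)
    (h : ∀ i j, toFun X i j = toFun Y i j) : HEq X.2.2 Y.2.2 := by
  obtain ⟨m, n, M⟩ := X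
  obtain ⟨m', n', M'⟩ := Y
  dsimp at h1 h2
  subst h1; subst h2
  have : M = M' := by
    ext i j
    have hh := h i.1 j.1
    simpa [toFun, i.isLt, j.isLt] using hh
  rw [this]
lemma dim_helper (m n s T : ℕ) (hns : n * s ∣ T) : m * s * (T / (n * s)) = m * (T / n) := by
  have h1 : T / (n * s) = T / n / s := (Nat.div_div_eq_div_mul _ _ _).symm
  have h2 : s ∣ T / n := (Nat.dvd_div_iff_mul_dvd (dvd_trans (dvd_mul_right n s) hns)).mpr hns
  rw [h1, mul_assoc, Nat.mul_div_cancel' h2]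
lemma cross_helper (n T₁ T₂ : ℕ) (h1 : n ∣ T₁) (h2 : n ∣ T₂) :
    T₁ / n * T₂ = T₂ / n * T₁ := by
  rw [Nat.mul_comm, ← Nat.mul_div_assoc T₂ h1, Nat.mul_comm T₂ T₁,
    Nat.mul_div_assoc T₁ h2, Nat.mul_comm]

/-- left identity equivalence is a congruence with respect to the left
semi-tensor product: `(A₀ ⊗ I_{s₁}) ⋉ (B₀ ⊗ I_{t₁}) ∼ (A₀ ⊗ I_{s₂}) ⋉ (B₀ ⊗ I_{t₂})`. -/

theorem lie_congr_stpM (A₀ B₀ : MatR)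
    (hA : 0 < A₀.1 ∧ 0 < A₀.2.1) (hB : 0 < B₀.1 ∧ 0 < B₀.2.1)
    (s₁ s₂ t₁ t₂ : ℕ) (hs₁ : 0 < s₁) (hs₂ : 0 < s₂) (ht₁ : 0 < t₁) (ht₂ : 0 < t₂) :
    lie (stpM (padK A₀ s₁) (padK B₀ t₁)) (stpM (padK A₀ s₂) (padK B₀ t₂)) := by
  obtain ⟨hm, hn⟩ := hA
  obtain ⟨hp, hq⟩ := hB
  have hT₁0 : 0 < Nat.lcm (A₀.2.1 * s₁) (B₀.1 * t₁) :=
    Nat.lcm_pos (Nat.mul_pos hn hs₁) (Nat.mul_pos hp ht₁)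
  have hT₂0 : 0 < Nat.lcm (A₀.2.1 * s₂) (B₀.1 * t₂) :=
    Nat.lcm_pos (Nat.mul_pos hn hs₂) (Nat.mul_pos hp ht₂)
  have hnT₁ : A₀.2.1 ∣ Nat.lcm (A₀.2.1 * s₁) (B₀.1 * t₁) :=
    dvd_trans (dvd_mul_right _ _) (Nat.dvd_lcm_left _ _)
  have hnT₂ : A₀.2.1 ∣ Nat.lcm (A₀.2.1 * s₂) (B₀.1 * t₂) :=
    dvd_trans (dvd_mul_right _ _) (Nat.dvd_lcm_left _ _)
  have hpT₁ : B₀.1 ∣ Nat.lcm (A₀.2.1 * s₁) (B₀.1 * t₁) :=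
    dvd_trans (dvd_mul_right _ _) (Nat.dvd_lcm_right _ _)
  have hpT₂ : B₀.1 ∣ Nat.lcm (A₀.2.1 * s₂) (B₀.1 * t₂) :=
    dvd_trans (dvd_mul_right _ _) (Nat.dvd_lcm_right _ _)
  refine ⟨Nat.lcm (A₀.2.1 * s₂) (B₀.1 * t₂), Nat.lcm (A₀.2.1 * s₁) (B₀.1 * t₁),
    hT₂0, hT₁0, heq_of_toFun _ _ ?_ ?_ ?_⟩
  · show A₀.1 * s₁ * (Nat.lcm (A₀.2.1 * s₁) (B₀.1 * t₁) / (A₀.2.1 * s₁)) *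
        Nat.lcm (A₀.2.1 * s₂) (B₀.1 * t₂)
      = A₀.1 * s₂ * (Nat.lcm (A₀.2.1 * s₂) (B₀.1 * t₂) / (A₀.2.1 * s₂)) *
        Nat.lcm (A₀.2.1 * s₁) (B₀.1 * t₁)
    rw [dim_helper _ _ _ _ (Nat.dvd_lcm_left _ _),
      dim_helper _ _ _ _ (Nat.dvd_lcm_left _ _), mul_assoc, mul_assoc,
      cross_helper _ _ _ hnT₁ hnT₂]
  · show B₀.2.1 * t₁ * (Nat.lcm (A₀.2.1 * s₁) (B₀.1 * t₁) / (B₀.1 * t₁)) *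
        Nat.lcm (A₀.2.1 * s₂) (B₀.1 * t₂)
      = B₀.2.1 * t₂ * (Nat.lcm (A₀.2.1 * s₂) (B₀.1 * t₂) / (B₀.1 * t₂)) *
        Nat.lcm (A₀.2.1 * s₁) (B₀.1 * t₁)
    rw [dim_helper _ _ _ _ (Nat.dvd_lcm_right _ _),
      dim_helper _ _ _ _ (Nat.dvd_lcm_right _ _), mul_assoc, mul_assoc,
      cross_helper _ _ _ hpT₁ hpT₂]
  · intro i j
    rw [toFun_padK _ hT₂0, toFun_padK _ hT₁0,
      toFun_stpM_padK A₀ B₀ hn hp hs₁ ht₁, toFun_stpM_padK A₀ B₀ hn hp hs₂ ht₂,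
      ← Phi_scale A₀ B₀ hT₁0 hT₂0 hnT₁ hpT₁ hn hp i j,
      ← Phi_scale A₀ B₀ hT₂0 hT₁0 hnT₂ hpT₂ hn hp i j,
      Nat.mul_comm (Nat.lcm (A₀.2.1 * s₁) (B₀.1 * t₁)) (Nat.lcm (A₀.2.1 * s₂) (B₀.1 * t₂))]
end

section
/- For positive integers i and j with gcd(i,j) > 1 and 1 ≤ j ≤ i, if f₁ = gcd(i,j), f₂ = gcd(i, j − f₁), etc., and g₁ = gcd(i, j−1), g₂ = gcd(i, j−1−g₁), etc., then the matrix unit E_{jj}^{i×i} equals the semi-tensor difference (⊞_{n'} E_{j̄'_{n'} j̄'_{n'}}^{ī'_{n'}×ī'_{n'}}) ⊟ (⊞_n E_{j̄_n j̄_n}^{ī_n×ī_n}), where ī'_{n'} = i/f_{n'}, j̄'_{n'} = (j − Σ_{α<n'} f_α)/f_{n'}, ī_n = i/g_n, j̄_n = (j−1 − Σ_{α<n} g_α)/g_n, and each pair satisfies gcd(ī, j̄) = 1. -/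
/-- The (1-indexed) matrix unit `E_{i j}^{r×c}` as an element of `MatR`. -/
def unitE (i j r c : ℕ) : MatR :=
  ⟨r, c, Matrix.of fun a b => if (a : ℕ) + 1 = i ∧ (b : ℕ) + 1 = j then (1 : ℝ) else 0⟩

/-- Iterated left semi-tensor sum `F 0 ⊞ F 1 ⊞ ⋯ ⊞ F k`. -/
def bigSta (F : ℕ → MatR) : ℕ → MatR
  | 0 => F 0
  | k + 1 => staM (bigSta F k) (F (k + 1))

/-!
Write `D(a, b)` for the diagonal 0/1 matrix whose ones sit exactly at the (0-indexed)
positions `a ≤ x < b`. Then `E_{rr} = D(r - 1, r)` and `D(a, b) ⊗ I_s = D(a s, b s)`.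
Hence, with `r_k = j - (f₁ + ⋯ + f_k)`, the `k`-th summand `E_{r_k/f_k, r_k/f_k}` of size
`i/f_k` is the band `[r_{k+1}, r_k)` of the `i × i` diagonal, sampled at resolution `f_k`
(which divides `i` and `r_k`). Under `⊞`, adjacent bands sampled at resolutions `d` and `e`
merge into their union sampled at resolution `gcd d e`. So the two greedy sums telescope to
`[0, j)` and `[0, j - 1)` sampled at resolutions `s ∣ j` and `t ∣ j - 1`. Since
`gcd s t = 1`, their difference is `D(j - 1, j) = E_{jj}` at full resolution.
-/

theorem Nat.lcm_div_div_eq_div_gcd {n d e : ℕ} (hn : 0 < n) (hd : d ∣ n) (he : e ∣ n) :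
    Nat.lcm (n / d) (n / e) = n / Nat.gcd d e := by
  have hd0 : 0 < d := Nat.pos_of_dvd_of_pos hd hn
  have he0 : 0 < e := Nat.pos_of_dvd_of_pos he hn
  apply Nat.dvd_antisymm
  · exact Nat.lcm_dvd (Nat.div_dvd_div_left hd (Nat.gcd_dvd_left d e))
      (Nat.div_dvd_div_left he (Nat.gcd_dvd_right d e))
  · rw [Nat.div_dvd_iff_dvd_mul ((Nat.gcd_dvd_left d e).trans hd)
      (Nat.gcd_pos_of_pos_left e hd0), ← Nat.gcd_mul_right]
    exact Nat.dvd_gcd ((Nat.div_dvd_iff_dvd_mul hd hd0).1 (Nat.dvd_lcm_left _ _))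
      ((Nat.div_dvd_iff_dvd_mul he he0).1 (Nat.dvd_lcm_right _ _))

theorem Nat.lcm_div_div_div_left {n d e : ℕ} (hn : 0 < n) (hd : d ∣ n) (he : e ∣ n) :
    Nat.lcm (n / d) (n / e) / (n / d) = d / Nat.gcd d e := by
  rw [Nat.lcm_div_div_eq_div_gcd hn hd he, ← Nat.div_mul_div hd (Nat.gcd_dvd_left d e),
    Nat.mul_div_cancel_left _ (Nat.div_pos (Nat.le_of_dvd hn hd) (Nat.pos_of_dvd_of_pos hd hn))]

theorem MatR.ext_toFun {A B : MatR} (h₁ : A.1 = B.1) (h₂ : A.2.1 = B.2.1)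
    (h : toFun A = toFun B) : A = B := by
  obtain ⟨m, n, A⟩ := A
  obtain ⟨m', n', B⟩ := B
  dsimp only at h₁ h₂
  subst h₁ h₂
  congr
  ext x y
  simpa [toFun] using congrFun (congrFun h x) y

theorem toFun_padK_s14 (A : MatR) {s : ℕ} (hs : 0 < s) (x y : ℕ) :
    toFun (padK A s) x y = if x % s = y % s then toFun A (x / s) (y / s) else 0 := by
  have hx : x < A.1 * s ↔ x / s < A.1 := (Nat.div_lt_iff_lt_mul hs).symm
  have hy : y < A.2.1 * s ↔ y / s < A.2.1 := (Nat.div_lt_iff_lt_mul hs).symm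
  unfold toFun padK kron
  simp only [Matrix.reindex_apply, Matrix.submatrix_apply, Matrix.kroneckerMap_apply,
    Matrix.one_apply, hx, hy]
  split_ifs <;> simp_all [Fin.ext_iff, finProdFinEquiv, Fin.divNat, Fin.modNat]

theorem padK_smulM (c : ℝ) (A : MatR) (s : ℕ) : padK (smulM c A) s = smulM c (padK A s) := by
  simp only [padK, smulM, kron, Matrix.smul_kronecker]
  rfl

theorem toFun_smulM (c : ℝ) (A : MatR) : toFun (smulM c A) = c • toFun A := by
  ext x y
  by_cases hx : x < A.1 <;> by_cases hy : y < A.2.1 <;> simp [toFun, smulM, hx, hy]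

theorem toFun_staM {A B : MatR} (hA : A.2.1 = A.1) (hB : B.2.1 = B.1) :
    toFun (staM A B) =
      toFun (padK A (Nat.lcm A.1 B.1 / A.1)) + toFun (padK B (Nat.lcm A.1 B.1 / B.1)) := by
  have hAl : A.1 * (Nat.lcm A.1 B.1 / A.1) = Nat.lcm A.1 B.1 :=
    Nat.mul_div_cancel' (Nat.dvd_lcm_left _ _)
  have hBl : B.1 * (Nat.lcm A.1 B.1 / B.1) = Nat.lcm A.1 B.1 :=
    Nat.mul_div_cancel' (Nat.dvd_lcm_right _ _)
  ext x y
  simp only [toFun, staM, padK, Pi.add_apply, Matrix.of_apply, hA, hB, hAl, hBl]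
  split_ifs <;> simp_all

def bandFun (a b : ℕ) : ℕ → ℕ → ℝ := fun x y =>
  if x = y ∧ a ≤ x ∧ x < b then 1 else 0

theorem bandFun_add_bandFun {a b c : ℕ} (hab : a ≤ b) (hbc : b ≤ c) :
    bandFun b c + bandFun a b = bandFun a c := by
  ext x y
  simp only [bandFun, Pi.add_apply]
  split_ifs <;> first | omega | norm_num

theorem bandFun_zero_sub_bandFun_zero {b c : ℕ} (hbc : b ≤ c) :
    bandFun 0 c - bandFun 0 b = bandFun b c := by
  ext x y
  simp only [bandFun, Pi.sub_apply]
  split_ifs <;> first | omega | norm_num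

def diagBand (a b n : ℕ) : MatR := ⟨n, n, Matrix.of fun x y => bandFun a b x y⟩

theorem toFun_diagBand {a b n : ℕ} (hbn : b ≤ n) : toFun (diagBand a b n) = bandFun a b := by
  ext x y
  unfold toFun diagBand bandFun
  simp only [Matrix.of_apply]
  split_ifs <;> first | rfl | omega

theorem toFun_padK_diagBand {a b n s : ℕ} (hs : 0 < s) (hbn : b ≤ n) :
    toFun (padK (diagBand a b n) s) = bandFun (a * s) (b * s) := by
  ext x y
  rw [toFun_padK_s14 _ hs, toFun_diagBand hbn]
  simp only [bandFun, Nat.le_div_iff_mul_le hs, Nat.div_lt_iff_lt_mul hs,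
    Nat.ext_div_mod_iff s x y]
  split_ifs <;> simp_all

theorem unitE_eq_diagBand (j n : ℕ) : unitE j j n n = diagBand (j - 1) j n := by
  unfold unitE diagBand bandFun
  congr
  ext x y
  split_ifs <;> first | rfl | omega

-- The band `[a, b)` of the `n × n` diagonal sampled at resolution `d`: for `d` dividing
-- `n`, `a` and `b`, padding it with `I_d` gives back `diagBand a b n`.
def scaledBand (n d a b : ℕ) : MatR := diagBand (a / d) (b / d) (n / d)

theorem scaledBand_one (n a b : ℕ) : scaledBand n 1 a b = diagBand a b n := by
  simp only [scaledBand, Nat.div_one]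

theorem toFun_scaledBand {n g a b : ℕ} (hbn : b ≤ n) :
    toFun (scaledBand n g a b) = bandFun (a / g) (b / g) :=
  toFun_diagBand (Nat.div_le_div_right hbn)

theorem toFun_padK_scaledBand {n d g a b : ℕ} (hd : 0 < d) (hgd : g ∣ d) (hda : d ∣ a)
    (hdb : d ∣ b) (hbn : b ≤ n) :
    toFun (padK (scaledBand n d a b) (d / g)) = bandFun (a / g) (b / g) := by
  have hg : 0 < g := Nat.pos_of_dvd_of_pos hgd hd
  rw [scaledBand, toFun_padK_diagBand (Nat.div_pos (Nat.le_of_dvd hd hgd) hg)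
    (Nat.div_le_div_right hbn), Nat.div_mul_div hda hgd, Nat.div_mul_div hdb hgd]

theorem unitE_div_eq_scaledBand (n d r : ℕ) :
    unitE (r / d) (r / d) (n / d) (n / d) = scaledBand n d (r - d) r := by
  rw [unitE_eq_diagBand, scaledBand, ← Nat.sub_mul_div r d 1, mul_one]

theorem staM_scaledBand_eq_of_toFun {n d e b c a' c' : ℕ} {B : MatR} (hn : 0 < n)
    (hd : d ∣ n) (he : e ∣ n) (hdb : d ∣ b) (hdc : d ∣ c) (hcn : c ≤ n) (hc'n : c' ≤ n)
    (hB₁ : B.1 = n / e) (hB₂ : B.2.1 = n / e)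
    (h : bandFun (b / Nat.gcd d e) (c / Nat.gcd d e) + toFun (padK B (e / Nat.gcd d e)) =
      bandFun (a' / Nat.gcd d e) (c' / Nat.gcd d e)) :
    staM (scaledBand n d b c) B = scaledBand n (Nat.gcd d e) a' c' := by
  have hd0 : 0 < d := Nat.pos_of_dvd_of_pos hd hn
  have hpad_left := Nat.lcm_div_div_div_left hn hd he
  have hpad_right : Nat.lcm (n / d) (n / e) / (n / e) = e / Nat.gcd d e := by
    rw [Nat.lcm_comm, Nat.gcd_comm, Nat.lcm_div_div_div_left hn he hd]
  apply MatR.ext_toFun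
  · show Nat.lcm (n / d) B.1 = n / Nat.gcd d e
    rw [hB₁, Nat.lcm_div_div_eq_div_gcd hn hd he]
  · show n / d * (Nat.lcm (n / d) B.1 / (n / d)) = n / Nat.gcd d e
    rw [hB₁, hpad_left, Nat.div_mul_div hd (Nat.gcd_dvd_left d e)]
  · rw [toFun_staM rfl (hB₂.trans hB₁.symm), toFun_scaledBand hc'n]
    show toFun (padK (scaledBand n d b c) (Nat.lcm (n / d) B.1 / (n / d))) +
      toFun (padK B (Nat.lcm (n / d) B.1 / B.1)) = _
    rw [hB₁, hpad_left, hpad_right,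
      toFun_padK_scaledBand hd0 (Nat.gcd_dvd_left d e) hdb hdc hcn, h]

theorem staM_scaledBand_scaledBand {n d e a b c : ℕ} (hn : 0 < n) (hd : d ∣ n) (he : e ∣ n)
    (hea : e ∣ a) (heb : e ∣ b) (hdb : d ∣ b) (hdc : d ∣ c)
    (hab : a ≤ b) (hbc : b ≤ c) (hcn : c ≤ n) :
    staM (scaledBand n d b c) (scaledBand n e a b) = scaledBand n (Nat.gcd d e) a c := by
  apply staM_scaledBand_eq_of_toFun hn hd he hdb hdc hcn hcn rfl rfl
  rw [toFun_padK_scaledBand (Nat.pos_of_dvd_of_pos he hn) (Nat.gcd_dvd_right d e) hea heb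
    (hbc.trans hcn)]
  exact bandFun_add_bandFun (Nat.div_le_div_right hab) (Nat.div_le_div_right hbc)

theorem staM_scaledBand_neg_scaledBand {n d e b c : ℕ} (hn : 0 < n) (hd : d ∣ n) (he : e ∣ n)
    (heb : e ∣ b) (hdc : d ∣ c) (hbc : b ≤ c) (hcn : c ≤ n) :
    staM (scaledBand n d 0 c) (smulM (-1) (scaledBand n e 0 b)) =
      scaledBand n (Nat.gcd d e) b c := by
  apply staM_scaledBand_eq_of_toFun hn hd he (dvd_zero d) hdc hcn hcn rfl rfl
  rw [padK_smulM, toFun_smulM, toFun_padK_scaledBand (Nat.pos_of_dvd_of_pos he hn)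
    (Nat.gcd_dvd_right d e) (dvd_zero e) heb (hbc.trans hcn), Nat.zero_div, neg_one_smul,
    ← sub_eq_add_neg]
  exact bandFun_zero_sub_bandFun_zero (Nat.div_le_div_right hbc)

def greedyRem (J : ℕ) (f : ℕ → ℕ) (k : ℕ) : ℕ := J - ∑ α ∈ Finset.range k, f α

section Greedy

variable {n J : ℕ} {f : ℕ → ℕ}

theorem greedyRem_zero : greedyRem J f 0 = J := by
  simp [greedyRem]

theorem greedyRem_succ (k : ℕ) : greedyRem J f (k + 1) = greedyRem J f k - f k := by
  simp only [greedyRem, Finset.sum_range_succ, Nat.sub_sub]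

theorem greedyRem_le (k : ℕ) : greedyRem J f k ≤ J := Nat.sub_le _ _

theorem dvd_greedyRem_succ {k : ℕ} (hfk : f k ∣ greedyRem J f k) :
    f k ∣ greedyRem J f (k + 1) := by
  rw [greedyRem_succ]
  exact Nat.dvd_sub hfk dvd_rfl

theorem unitE_greedyRem_eq_scaledBand (k : ℕ) :
    unitE (greedyRem J f k / f k) (greedyRem J f k / f k) (n / f k) (n / f k) =
      scaledBand n (f k) (greedyRem J f (k + 1)) (greedyRem J f k) := by
  rw [greedyRem_succ]
  exact unitE_div_eq_scaledBand n (f k) _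

theorem bigSta_greedy_eq_scaledBand {m : ℕ} (hn : 0 < n) (hJn : J ≤ n)
    (hf : ∀ k < m, f k = Nat.gcd n (greedyRem J f k)) :
    ∀ k < m, ∃ s, s ∣ n ∧ s ∣ J ∧ s ∣ greedyRem J f (k + 1) ∧
      bigSta (fun k => unitE (greedyRem J f k / f k) (greedyRem J f k / f k)
        (n / f k) (n / f k)) k = scaledBand n s (greedyRem J f (k + 1)) J := by
  have hfn : ∀ k < m, f k ∣ n := fun k hk => hf k hk ▸ Nat.gcd_dvd_left _ _
  have hfr : ∀ k < m, f k ∣ greedyRem J f k := fun k hk => hf k hk ▸ Nat.gcd_dvd_right _ _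
  intro k
  induction k with
  | zero =>
    intro hm
    refine ⟨f 0, hfn 0 hm, greedyRem_zero (J := J) (f := f) ▸ hfr 0 hm,
      dvd_greedyRem_succ (hfr 0 hm), ?_⟩
    rw [bigSta, unitE_greedyRem_eq_scaledBand, greedyRem_zero]
  | succ k ih =>
    intro hk
    obtain ⟨s, hsn, hsJ, hsr, hs⟩ := ih (by omega)
    have hgs := Nat.gcd_dvd_left s (f (k + 1))
    have hgf := Nat.gcd_dvd_right s (f (k + 1))
    have hfr' := dvd_greedyRem_succ (hfr (k + 1) hk)
    refine ⟨_, hgs.trans hsn, hgs.trans hsJ, hgf.trans hfr', ?_⟩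
    rw [bigSta, hs, unitE_greedyRem_eq_scaledBand]
    exact staM_scaledBand_scaledBand hn hsn (hfn (k + 1) hk) hfr' (hfr (k + 1) hk) hsr hsJ
      ((greedyRem_succ _).symm ▸ Nat.sub_le _ _) (greedyRem_le _) hJn

theorem bigSta_greedy_eq_scaledBand_of_sum_eq {m : ℕ} (hn : 0 < n) (hJn : J ≤ n) (hm : 0 < m)
    (hf : ∀ k < m, f k = Nat.gcd n (greedyRem J f k))
    (hsum : ∑ k ∈ Finset.range m, f k = J) :
    ∃ s, s ∣ n ∧ s ∣ J ∧
      bigSta (fun k => unitE (greedyRem J f k / f k) (greedyRem J f k / f k)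
        (n / f k) (n / f k)) (m - 1) = scaledBand n s 0 J := by
  obtain ⟨s, hsn, hsJ, -, hs⟩ := bigSta_greedy_eq_scaledBand hn hJn hf (m - 1) (by omega)
  rw [Nat.sub_add_cancel hm, greedyRem, hsum, Nat.sub_self] at hs
  exact ⟨s, hsn, hsJ, hs⟩

end Greedy

theorem unitE_greedy_gcd_decomposition_general (i j : ℕ) (h1j : 1 ≤ j) (hji : j ≤ i)
    (f g : ℕ → ℕ) (m' m : ℕ) (hm' : 0 < m') (hm : 0 < m)
    (hf : ∀ k < m', f k = Nat.gcd i (j - ∑ α ∈ Finset.range k, f α))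
    (hfsum : ∑ k ∈ Finset.range m', f k = j)
    (hgg : ∀ k < m, g k = Nat.gcd i (j - 1 - ∑ α ∈ Finset.range k, g α))
    (hgsum : ∑ k ∈ Finset.range m, g k = j - 1) :
    unitE j j i i =
      staM
        (bigSta (fun k =>
          unitE ((j - ∑ α ∈ Finset.range k, f α) / f k)
            ((j - ∑ α ∈ Finset.range k, f α) / f k) (i / f k) (i / f k)) (m' - 1))
        (smulM (-1)
          (bigSta (fun k =>
            unitE ((j - 1 - ∑ α ∈ Finset.range k, g α) / g k)
              ((j - 1 - ∑ α ∈ Finset.range k, g α) / g k) (i / g k) (i / g k)) (m - 1))) ∧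
    (∀ k < m', Nat.gcd (i / f k) ((j - ∑ α ∈ Finset.range k, f α) / f k) = 1) ∧
    (∀ k < m, Nat.gcd (i / g k) ((j - 1 - ∑ α ∈ Finset.range k, g α) / g k) = 1) := by
  have hi : 0 < i := by omega
  obtain ⟨s, hsi, hsj, hF⟩ := bigSta_greedy_eq_scaledBand_of_sum_eq hi hji hm' hf hfsum
  obtain ⟨t, hti, htj, hG⟩ :=
    bigSta_greedy_eq_scaledBand_of_sum_eq hi (by omega) hm hgg hgsum
  have hst : Nat.gcd s t = 1 := by
    have h := Nat.dvd_sub ((Nat.gcd_dvd_left s t).trans hsj) ((Nat.gcd_dvd_right s t).trans htj)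
    rwa [Nat.sub_sub_self h1j, Nat.dvd_one] at h
  refine ⟨?_, fun k hk => ?_, fun k hk => ?_⟩
  · calc unitE j j i i = scaledBand i (Nat.gcd s t) (j - 1) j := by
          rw [hst, scaledBand_one, unitE_eq_diagBand]
      _ = staM (scaledBand i s 0 j) (smulM (-1) (scaledBand i t 0 (j - 1))) :=
          (staM_scaledBand_neg_scaledBand hi hsi hti htj hsj (Nat.sub_le j 1) hji).symm
      _ = _ := by rw [← hF, ← hG]; rfl
  · rw [hf k hk]
    exact Nat.coprime_div_gcd_div_gcd (Nat.gcd_pos_of_pos_left _ hi)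
  · rw [hgg k hk]
    exact Nat.coprime_div_gcd_div_gcd (Nat.gcd_pos_of_pos_left _ hi)

/-- greedy-gcd decomposition of a diagonal matrix unit.  If
`1 ≤ j ≤ i`, `gcd(i,j) > 1`, and `f, g` are the greedy gcd sequences with
`f₁ + ⋯ + f_{m'} = j` and `g₁ + ⋯ + g_m = j - 1`, then
`E_{jj}^{i×i} = (⊞_{n'} E_{j̄'_{n'} j̄'_{n'}}^{ī'_{n'}×ī'_{n'}}) ⊟ (⊞_n E_{j̄_n j̄_n}^{ī_n×ī_n})`,
and each pair satisfies `gcd(ī,j̄) = 1`. -/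
theorem unitE_greedy_gcd_decomposition (i j : ℕ) (h1j : 1 ≤ j) (hji : j ≤ i)
    (hgcd : 1 < Nat.gcd i j)
    (f g : ℕ → ℕ) (m' m : ℕ) (hm' : 0 < m') (hm : 0 < m)
    (hf : ∀ k < m', f k = Nat.gcd i (j - ∑ α ∈ Finset.range k, f α))
    (hfsum : ∑ k ∈ Finset.range m', f k = j)
    (hgg : ∀ k < m, g k = Nat.gcd i (j - 1 - ∑ α ∈ Finset.range k, g α))
    (hgsum : ∑ k ∈ Finset.range m, g k = j - 1) :
    unitE j j i i =
      staM
        (bigSta (fun k =>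
          unitE ((j - ∑ α ∈ Finset.range k, f α) / f k)
            ((j - ∑ α ∈ Finset.range k, f α) / f k) (i / f k) (i / f k)) (m' - 1))
        (smulM (-1)
          (bigSta (fun k =>
            unitE ((j - 1 - ∑ α ∈ Finset.range k, g α) / g k)
              ((j - 1 - ∑ α ∈ Finset.range k, g α) / g k) (i / g k) (i / g k)) (m - 1))) ∧
    (∀ k < m', Nat.gcd (i / f k) ((j - ∑ α ∈ Finset.range k, f α) / f k) = 1) ∧
    (∀ k < m, Nat.gcd (i / g k) ((j - 1 - ∑ α ∈ Finset.range k, g α) / g k) = 1) :=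
  unitE_greedy_gcd_decomposition_general i j h1j hji f g m' m hm' hm hf hfsum hgg hgsum
end
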